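/- Let h ∈ I_ℓ(R). (1) If h fixes some x_{n_0} (i.e. x_{n_0} ∈ dom h and h x_{n_0} = x_{n_0}) and dom h contains x_{n_1} for some n_1 ≠ n_0, then x_n ∈ dom h and h x_n = x_n for all n ∈ ℤ. (2) If z is a generator of R, h fixes the element x_{n_0} z, and dom h contains x_{n_1} z for some n_1 ≠ n_0, then h fixes the constructible right ideal ⋃_{n ∈ ℤ, w' ∈ R ∖ {e}} x_n w' R pointwise. -/

import Mathlib

open scoped Classical

namespace SgC

variable {M : Type*}

/-- Composition of partial maps (`g` after `f`). -/
def pcomp (g f : M → Option M) : M → Option M := fun s => (f s).bind g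

/-- The canonical partial inverse of a partial map (the genuine inverse when the map
is injective on its domain, as is the case for all maps in the left inverse hull of a
left cancellative monoid). -/
noncomputable def pinv (f : M → Option M) : M → Option M :=
  fun t => if h : ∃ s, f s = some t then some h.choose else none

/-- Left translation `t ↦ s * t` as an everywhere-defined partial map. -/
def ptransl [Mul M] (s : M) : M → Option M := fun t => some (s * t)

/-- The identity partial map. -/
def pid : M → Option M := fun s => some s

/-- The block `q⁻¹ ∘ p`: first multiply on the left by `p`, then remove `q` on the left. -/
noncomputable def pblock [Mul M] (p : M × M) : M → Option M :=
  pcomp (pinv (ptransl p.2)) (ptransl p.1)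

/-- Membership in the left inverse hull `I_ℓ(M)`: `h` is of the form
`s₂ₙ⁻¹ s₂ₙ₋₁ ⋯ s₂⁻¹ s₁` for some `n ≥ 1` and `sᵢ ∈ M` (the list records the pairs
`(s₁,s₂), (s₃,s₄), …`, applied left to right). -/
def InInvHull [Mul M] (h : M → Option M) : Prop :=
  ∃ l : List (M × M), l ≠ [] ∧
    h = l.foldl (fun acc p => pcomp (pblock p) acc) pid

/-- Membership in the inverse hull generated by translations by elements of `σ` only
(used for canonical copies of `I_ℓ(S)` inside partial maps of a larger monoid). -/
def InInvHullOn [Mul M] (σ : Set M) (h : M → Option M) : Prop :=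
  ∃ l : List (M × M), l ≠ [] ∧ (∀ p ∈ l, p.1 ∈ σ ∧ p.2 ∈ σ) ∧
    h = l.foldl (fun acc p => pcomp (pblock p) acc) pid

/-- Domain of a partial map. -/
def pdom (h : M → Option M) : Set M := {s | h s ≠ none}

/-- `h` fixes the set `Y` pointwise (in particular `Y ⊆ dom h`). -/
def PFixes (h : M → Option M) (Y : Set M) : Prop := ∀ s ∈ Y, h s = some s

/-- Preimage of a set under a partial map. -/
def ppre (h : M → Option M) (X : Set M) : Set M := {s | ∃ x ∈ X, h s = some x}

/-- Constructible right ideals: domains of elements of the left inverse hull. -/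
def IsConstructible [Mul M] (X : Set M) : Prop := ∃ h, InInvHull h ∧ X = pdom h

/-- Membership in `J̄(S)`: sets of the form `X₀` or `X₀ ∖ (X₁ ∪ ⋯ ∪ Xₘ)` with all
`Xᵢ` constructible. -/
def IsConstructibleBar [Mul M] (X : Set M) : Prop :=
  ∃ (X₀ : Set M) (m : ℕ) (Xi : Fin m → Set M),
    IsConstructible X₀ ∧ (∀ i, IsConstructible (Xi i)) ∧ X = X₀ \ ⋃ i, Xi i

/-- `Xi` is a foundation family for `X`: each `Xi i ⊆ X` and every nonempty
constructible right ideal contained in `X` intersects some `Xi i`. -/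
def IsFoundation [Mul M] (X : Set M) {ι : Type*} (Xi : ι → Set M) : Prop :=
  (∀ i, Xi i ⊆ X) ∧
  ∀ Y : Set M, IsConstructible Y → Y.Nonempty → Y ⊆ X → ∃ i, (Y ∩ Xi i).Nonempty

/-- Strong C*-regularity. -/
def StronglyRegular (M : Type*) [Monoid M] : Prop :=
  ∀ (n : ℕ) (h : Fin n → M → Option M), (∀ k, InInvHull (h k)) →
  ∀ (m : ℕ) (X : Set M) (Xi : Fin m → Set M),
    IsConstructible X → (∀ i, IsConstructible (Xi i)) →
    (X \ ⋃ i, Xi i).Nonempty →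
    (X \ ⋃ i, Xi i) ⊆ ⋃ k, {s | h k s = some s} →
    ∃ (l : ℕ) (Y : Fin l → Set M) (kk : Fin l → Fin n),
      (∀ j, IsConstructible (Y j)) ∧
      (X \ ⋃ i, Xi i) ⊆ ⋃ j, Y j ∧
      ∀ j, PFixes (h (kk j)) (Y j)

/-- C*-regularity. -/
def Regular (M : Type*) [Monoid M] : Prop :=
  ∀ (n : ℕ) (h : Fin n → M → Option M), (∀ k, InInvHull (h k)) →
  ∀ X : Set M, IsConstructibleBar X → X.Nonempty →
    X ⊆ ⋃ k, {s | h k s = some s} →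
    ∃ (l : ℕ) (Y : Fin l → Set M) (kk : Fin l → Fin n),
      (∀ j, IsConstructibleBar (Y j)) ∧ X ⊆ ⋃ j, Y j ∧
      ∀ j, PFixes (h (kk j)) (Y j)

/-- Strong C*-regularity on the boundary. -/
def StronglyRegularOnBoundary (M : Type*) [Monoid M] : Prop :=
  ∀ (n : ℕ) (h : Fin n → M → Option M), (∀ k, InInvHull (h k)) →
  ∀ (m : ℕ) (X : Set M) (Xi : Fin m → Set M),
    IsConstructible X → (∀ i, IsConstructible (Xi i)) → (∀ i, Xi i ⊆ X) →
    (X \ ⋃ i, Xi i).Nonempty →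
    (X \ ⋃ i, Xi i) ⊆ ⋃ k, {s | h k s = some s} →
    ∃ (l : ℕ) (Y : Fin l → Set M) (kk : Fin l → Fin n),
      (∀ j, IsConstructible (Y j)) ∧ (∀ j, PFixes (h (kk j)) (Y j)) ∧
      IsFoundation X (Sum.elim Xi Y)

/-- C*-regularity on the boundary. -/
def RegularOnBoundary (M : Type*) [Monoid M] : Prop :=
  ∀ (n : ℕ) (h : Fin n → M → Option M), (∀ k, InInvHull (h k)) →
  ∀ (m : ℕ) (X : Set M) (Xi : Fin m → Set M),
    IsConstructible X → (∀ i, IsConstructible (Xi i)) → (∀ i, Xi i ⊆ X) →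
    (X \ ⋃ i, Xi i).Nonempty →
    (X \ ⋃ i, Xi i) ⊆ ⋃ k, {s | h k s = some s} →
    ∃ (l : ℕ) (Y : Fin l → Set M) (kk : Fin l → Fin n),
      (∀ j, IsConstructibleBar (Y j)) ∧ (∀ j, PFixes (h (kk j)) (Y j)) ∧
      IsFoundation X (Sum.elim Xi Y)

/-- The type of constructible right ideals `J(M)`. -/
def CIdeal (M : Type*) [Mul M] : Type _ := {X : Set M // IsConstructible X}

/-- The character space `{0,1}^{J(M)}` with the topology of pointwise convergence. -/
abbrev CharSpace (M : Type*) [Mul M] : Type _ := CIdeal M → Bool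

/-- The principal character `χ_s`. -/
noncomputable def princhar [Mul M] (s : M) : CharSpace M :=
  fun X => decide (s ∈ X.1)

/-- `Ω(M)`: the closure of the set of principal characters. -/
noncomputable def Omega (M : Type*) [Mul M] : Set (CharSpace M) :=
  closure (Set.range (princhar : M → CharSpace M))

/-- Filters on `J(M)`: nonempty collections of nonempty constructible ideals closed
under intersections and enlargements within `J(M)`. -/
def IsFilterOn [Mul M] (F : Set (CIdeal M)) : Prop :=
  F.Nonempty ∧ (∀ X ∈ F, (X.1 : Set M).Nonempty) ∧
  (∀ X ∈ F, ∀ Y ∈ F, ∀ Z : CIdeal M, Z.1 = X.1 ∩ Y.1 → Z ∈ F) ∧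
  (∀ X ∈ F, ∀ Y : CIdeal M, X.1 ⊆ Y.1 → Y ∈ F)

/-- Nonzero multiplicative `{0,1}`-valued maps on `J(M)`. -/
def IsChar [Mul M] (χ : CharSpace M) : Prop :=
  (∃ X, χ X = true) ∧
  ∀ X Y Z : CIdeal M, Z.1 = X.1 ∩ Y.1 → χ Z = (χ X && χ Y)

/-- Maximal characters: characters whose associated filter is maximal among filters. -/
def IsMaximalChar [Mul M] (χ : CharSpace M) : Prop :=
  IsChar χ ∧ IsFilterOn {X | χ X = true} ∧
  ∀ G : Set (CIdeal M), IsFilterOn G → {X | χ X = true} ⊆ G → G = {X | χ X = true}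

/-- The set of maximal characters `Ω_max(M)`. -/
def OmegaMax (M : Type*) [Mul M] : Set (CharSpace M) := {χ | IsMaximalChar χ}

/-- The boundary `∂Ω(M)`: the closure of the set of maximal characters. -/
noncomputable def BoundaryOmega (M : Type*) [Mul M] : Set (CharSpace M) :=
  closure (OmegaMax M)


/-! ### The monoid `R` -/

/-- Generators of the monoid `R`. -/
inductive Gen : Type
  | a : Gen
  | b : Gen
  | c : Gen
  | d : Gen
  | f : Gen
  | x : ℤ → Gen
  | y : ℤ → Gen

/-- The defining relations of the monoid `R`. -/
inductive RRel : FreeMonoid Gen → FreeMonoid Gen → Prop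
  | abx (n : ℤ) : RRel (FreeMonoid.of Gen.a * FreeMonoid.of Gen.b * FreeMonoid.of (Gen.x n))
      (FreeMonoid.of Gen.b * FreeMonoid.of (Gen.x n))
  | aby (n : ℤ) : RRel (FreeMonoid.of Gen.a * FreeMonoid.of Gen.b * FreeMonoid.of (Gen.y n))
      (FreeMonoid.of Gen.b * FreeMonoid.of (Gen.y (n + 1)))
  | cbx (n : ℤ) : RRel (FreeMonoid.of Gen.c * FreeMonoid.of Gen.b * FreeMonoid.of (Gen.x n))
      (FreeMonoid.of Gen.b * FreeMonoid.of (Gen.x (n + 1)))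
  | cby (n : ℤ) : RRel (FreeMonoid.of Gen.c * FreeMonoid.of Gen.b * FreeMonoid.of (Gen.y n))
      (FreeMonoid.of Gen.b * FreeMonoid.of (Gen.y n))
  | dbx (n : ℤ) (z : Gen) :
      RRel (FreeMonoid.of Gen.d * FreeMonoid.of Gen.b * FreeMonoid.of (Gen.x n) * FreeMonoid.of z)
        (FreeMonoid.of Gen.b * FreeMonoid.of (Gen.x n) * FreeMonoid.of z)
  | fby (n : ℤ) (z : Gen) :
      RRel (FreeMonoid.of Gen.f * FreeMonoid.of Gen.b * FreeMonoid.of (Gen.y n) * FreeMonoid.of z)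
        (FreeMonoid.of Gen.b * FreeMonoid.of (Gen.y n) * FreeMonoid.of z)

/-- The monoid `R`: the quotient of the free monoid on the generators by the congruence
generated by the defining relations. -/
def R : Type := (conGen RRel).Quotient

noncomputable instance : Monoid R := inferInstanceAs (Monoid (conGen RRel).Quotient)

/-- The quotient map from the free monoid on the generators onto `R`. -/
def qR : FreeMonoid Gen →* R := Con.mk' _

/-- The image in `R` of a generator. -/
noncomputable def gen (g : Gen) : R := qR (FreeMonoid.of g)

/-- A word contains a forbidden factor. -/
def IsForbidden (w : FreeMonoid Gen) : Prop :=
  ∃ n : ℤ,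
    w = FreeMonoid.of Gen.a * FreeMonoid.of Gen.b * FreeMonoid.of (Gen.x n) ∨
    w = FreeMonoid.of Gen.a * FreeMonoid.of Gen.b * FreeMonoid.of (Gen.y n) ∨
    w = FreeMonoid.of Gen.c * FreeMonoid.of Gen.b * FreeMonoid.of (Gen.x n) ∨
    w = FreeMonoid.of Gen.c * FreeMonoid.of Gen.b * FreeMonoid.of (Gen.y n) ∨
    w = FreeMonoid.of Gen.d * FreeMonoid.of Gen.b * FreeMonoid.of (Gen.x n) ∨
    w = FreeMonoid.of Gen.f * FreeMonoid.of Gen.b * FreeMonoid.of (Gen.y n)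

/-- A word is reduced if it contains no forbidden factor. -/
def ReducedWord (u : FreeMonoid Gen) : Prop :=
  ¬ ∃ p w s : FreeMonoid Gen, IsForbidden w ∧ u = p * w * s

/-- The prefix word `w₁ w₂ ⋯ wₙ` of an infinite word. -/
def prefixWord (w : ℕ → Gen) (n : ℕ) : FreeMonoid Gen :=
  FreeMonoid.ofList ((List.range n).map w)


/-!
Follow the letter `x_{n₀}` through the normal forms of the intermediate values of `h`, as a marked
letter in words `pre ++ x_m :: r`. Left multiplication by a generator rewrites at most the first
two letters of a normal form, so it sends `pre ++ x_m :: r` to `pre' ++ x_{m+δ} :: r` with `pre'`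
and `δ` independent of `m` and of the tail `r` (only whether `r` is empty matters). Cancelling a
left factor `q` behaves in the same way unless the marked letter is absorbed into `q`, and this is
excluded by running `h` in parallel on `x_{n₁}`, which differs from `x_{n₀}` exactly at the mark.
Hence `h` sends every `pre ++ x_m :: r'` to `preN ++ x_{m+δ} :: r'`; as `h` fixes `x_{n₀} r`,
`preN` is empty and `δ = 0`.
-/

/-! ### Normal forms in `R` -/

abbrev Word := List Gen

/-- Left multiplication of a normal form by a generator: in a word containing no left-hand side of
a defining relation, the new letter can only create one at the front. -/
def mulGen : Gen → Word → Word
  | .a, .b :: .x n :: w => .b :: .x n :: w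
  | .a, .b :: .y n :: w => .b :: .y (n + 1) :: w
  | .c, .b :: .x n :: w => .b :: .x (n + 1) :: w
  | .c, .b :: .y n :: w => .b :: .y n :: w
  | .d, .b :: .x n :: z :: w => .b :: .x n :: z :: w
  | .f, .b :: .y n :: z :: w => .b :: .y n :: z :: w
  | g, w => g :: w

def invGen : Gen → Word → Word
  | .a, .a :: w => w
  | .a, .b :: .y n :: w => .b :: .y (n - 1) :: w
  | .c, .c :: w => w
  | .c, .b :: .x n :: w => .b :: .x (n - 1) :: w
  | .d, .d :: w => w
  | .f, .f :: w => w
  | .b, w | .x _, w | .y _, w => w.tail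
  | _, w => w

lemma invGen_mulGen (g : Gen) (w : Word) : invGen g (mulGen g w) = w := by
  unfold mulGen
  split <;> first | rfl | (cases g <;> rfl) | simp [invGen]

lemma mulGen_injective (g : Gen) : Function.Injective (mulGen g) :=
  Function.LeftInverse.injective (invGen_mulGen g)

lemma mulGen_ne_nil (g : Gen) (w : Word) : mulGen g w ≠ [] := by
  unfold mulGen
  split <;> simp

lemma mulGen_nil (g : Gen) : mulGen g [] = [g] := by
  cases g <;> rfl

lemma eq_of_mulGen_eq_x_cons {g : Gen} {w t : Word} {n : ℤ} (h : mulGen g w = .x n :: t) :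
    g = .x n := by
  unfold mulGen at h
  split at h <;> simp_all

def mulWord (Q w : Word) : Word := Q.foldr mulGen w

@[simp] lemma mulWord_nil (w : Word) : mulWord [] w = w := rfl

@[simp] lemma mulWord_cons (g : Gen) (Q w : Word) : mulWord (g :: Q) w = mulGen g (mulWord Q w) :=
  rfl

lemma mulWord_injective (Q : Word) : Function.Injective (mulWord Q) := by
  induction Q with
  | nil => exact Function.injective_id
  | cons g Q ih => exact (mulGen_injective g).comp ih

lemma eq_nil_of_mulWord_eq_nil {Q w : Word} (h : mulWord Q w = []) : Q = [] := by
  cases Q with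
  | nil => rfl
  | cons g Q => exact absurd h (mulGen_ne_nil g _)

noncomputable def ofWord (w : Word) : R := qR (FreeMonoid.ofList w)

@[simp] lemma ofWord_nil : ofWord [] = 1 := map_one qR

@[simp] lemma ofWord_cons (g : Gen) (w : Word) : ofWord (g :: w) = gen g * ofWord w :=
  map_mul qR (FreeMonoid.of g) (FreeMonoid.ofList w)

lemma ofWord_surjective : Function.Surjective ofWord := fun s => by
  obtain ⟨w, rfl⟩ := Con.mk'_surjective (c := conGen RRel) s
  exact ⟨FreeMonoid.toList w, congrArg qR (FreeMonoid.ofList_toList w)⟩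

lemma qR_eq_of_rrel {w w' : FreeMonoid Gen} (h : RRel w w') : qR w = qR w' :=
  (Con.eq _).2 (ConGen.Rel.of _ _ h)

lemma gen_abx (n : ℤ) : gen .a * gen .b * gen (.x n) = gen .b * gen (.x n) := by
  simpa only [gen, map_mul] using qR_eq_of_rrel (.abx n)

lemma gen_aby (n : ℤ) : gen .a * gen .b * gen (.y n) = gen .b * gen (.y (n + 1)) := by
  simpa only [gen, map_mul] using qR_eq_of_rrel (.aby n)

lemma gen_cbx (n : ℤ) : gen .c * gen .b * gen (.x n) = gen .b * gen (.x (n + 1)) := by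
  simpa only [gen, map_mul] using qR_eq_of_rrel (.cbx n)

lemma gen_cby (n : ℤ) : gen .c * gen .b * gen (.y n) = gen .b * gen (.y n) := by
  simpa only [gen, map_mul] using qR_eq_of_rrel (.cby n)

lemma gen_dbx (n : ℤ) (z : Gen) :
    gen .d * gen .b * gen (.x n) * gen z = gen .b * gen (.x n) * gen z := by
  simpa only [gen, map_mul] using qR_eq_of_rrel (.dbx n z)

lemma gen_fby (n : ℤ) (z : Gen) :
    gen .f * gen .b * gen (.y n) * gen z = gen .b * gen (.y n) * gen z := by
  simpa only [gen, map_mul] using qR_eq_of_rrel (.fby n z)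

lemma ofWord_mulGen (g : Gen) (w : Word) : ofWord (mulGen g w) = gen g * ofWord w := by
  unfold mulGen
  split <;>
    simp only [ofWord_cons, ← mul_assoc, gen_abx, gen_aby, gen_cbx, gen_cby, gen_dbx, gen_fby]

lemma ofWord_mulWord (Q w : Word) : ofWord (mulWord Q w) = ofWord Q * ofWord w := by
  induction Q with
  | nil => simp
  | cons g Q ih => simp [ofWord_mulGen, ih, mul_assoc]

def freeWordAction : FreeMonoid Gen →* Function.End Word := FreeMonoid.lift mulGen

lemma freeWordAction_eq_of_rrel {w w' : FreeMonoid Gen} (h : RRel w w') :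
    freeWordAction w = freeWordAction w' := by
  funext l
  cases h with
  | abx n | aby n | cbx n | cby n => rfl
  | dbx n z | fby n z =>
    show mulGen _ (mulGen .b (mulGen _ (mulGen z l))) = mulGen .b (mulGen _ (mulGen z l))
    obtain ⟨s, t, hst⟩ := List.exists_cons_of_ne_nil (mulGen_ne_nil z l)
    rw [hst]
    rfl

noncomputable def wordAction : R →* Function.End Word :=
  Con.lift _ freeWordAction
    (Con.conGen_le.2 fun _ _ h => (Con.ker_rel _).2 (freeWordAction_eq_of_rrel h))

noncomputable def nf (s : R) : Word := wordAction s []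

lemma wordAction_ofWord (Q : Word) : wordAction (ofWord Q) = mulWord Q := by
  induction Q with
  | nil => exact map_one wordAction
  | cons g Q ih =>
    rw [ofWord_cons, map_mul, ih]
    rfl

lemma nf_ofWord (Q : Word) : nf (ofWord Q) = mulWord Q [] := by
  rw [nf, wordAction_ofWord]

lemma ofWord_nf (s : R) : ofWord (nf s) = s := by
  obtain ⟨Q, rfl⟩ := ofWord_surjective s
  rw [nf_ofWord, ofWord_mulWord, ofWord_nil, mul_one]

lemma nf_injective : Function.Injective nf :=
  Function.LeftInverse.injective ofWord_nf

lemma nf_mul (s t : R) : nf (s * t) = mulWord (nf s) (nf t) := by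
  conv_lhs => rw [← ofWord_nf s]
  rw [nf, map_mul, Function.End.mul_def, wordAction_ofWord]
  rfl

lemma mul_ofWord (s : R) (w : Word) : s * ofWord w = ofWord (mulWord (nf s) w) := by
  rw [ofWord_mulWord, ofWord_nf]

instance : IsLeftCancelMul R where
  mul_left_cancel s t t' h := nf_injective <| mulWord_injective (nf s) <| by
    rw [← nf_mul, ← nf_mul]
    exact congrArg nf h

lemma nf_ne_nil_of_mul {s t : R} (hs : s ≠ 1) : nf (s * t) ≠ [] := fun h => hs <| by
  rw [← ofWord_nf s, eq_nil_of_mulWord_eq_nil ((nf_mul s t).symm.trans h), ofWord_nil]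

/-! ### Runs through the blocks of an element of the left inverse hull -/

section BlockRun

variable {M : Type*} [Mul M]

/-- `BlockRun l s t`: the composite of the blocks `q⁻¹ p` listed in `l` sends `s` to `t`. -/
inductive BlockRun : List (M × M) → M → M → Prop
  | nil (s : M) : BlockRun [] s s
  | cons {p q s u t : M} {l : List (M × M)} :
      q * u = p * s → BlockRun l u t → BlockRun ((p, q) :: l) s t

lemma blockRun_cons_iff {p q s t : M} {l : List (M × M)} :
    BlockRun ((p, q) :: l) s t ↔ ∃ u, q * u = p * s ∧ BlockRun l u t := by
  constructor
  · rintro (_ | ⟨hu, hl⟩)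
    exact ⟨_, hu, hl⟩
  · rintro ⟨u, hu, hl⟩
    exact .cons hu hl

variable [IsLeftCancelMul M]

lemma pinv_ptransl_eq_some {q v u : M} : pinv (ptransl q) v = some u ↔ q * u = v := by
  unfold pinv
  split_ifs with hex
  · have hchoose : q * hex.choose = v := Option.some_inj.1 hex.choose_spec
    rw [Option.some_inj]
    exact ⟨fun h => h ▸ hchoose, fun h => mul_left_cancel (hchoose.trans h.symm)⟩
  · simp only [false_iff]
    exact fun h => hex ⟨u, congrArg some h⟩

lemma pblock_eq_some {p q s u : M} : pblock (p, q) s = some u ↔ q * u = p * s :=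
  pinv_ptransl_eq_some

lemma foldl_pblock_eq_some (l : List (M × M)) (acc : M → Option M) (s t : M) :
    l.foldl (fun acc p => pcomp (pblock p) acc) acc s = some t ↔
      ∃ u, acc s = some u ∧ BlockRun l u t := by
  induction l generalizing acc with
  | nil =>
    refine ⟨fun h => ⟨t, h, .nil t⟩, ?_⟩
    rintro ⟨u, hu, ⟨⟩⟩
    exact hu
  | cons pq l ih =>
    obtain ⟨p, q⟩ := pq
    simp only [List.foldl_cons, ih, pcomp, Option.bind_eq_some_iff, pblock_eq_some,
      blockRun_cons_iff]
    aesop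

lemma InInvHull.exists_blockRun {h : M → Option M} (hh : InInvHull h) :
    ∃ l : List (M × M), ∀ s t, h s = some t ↔ BlockRun l s t := by
  obtain ⟨l, -, rfl⟩ := hh
  exact ⟨l, fun s t => by simp [foldl_pblock_eq_some, pid]⟩

end BlockRun

/-! ### Following a marked letter -/

/-- Only the emptiness of the tail `r` is visible to the rewriting, through the relations
`d b x_n z = b x_n z`. -/
def MapsMarked (φ : Word → Word) (r₀ pre pre' : Word) (δ : ℤ) : Prop :=
  ∀ m r, (r = [] ↔ r₀ = []) → φ (pre ++ .x m :: r) = pre' ++ .x (m + δ) :: r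

lemma MapsMarked.comp {φ ψ : Word → Word} {r₀ pre pre' pre'' : Word} {δ δ' : ℤ}
    (hφ : MapsMarked φ r₀ pre pre' δ) (hψ : MapsMarked ψ r₀ pre' pre'' δ') :
    MapsMarked (ψ ∘ φ) r₀ pre pre'' (δ + δ') := fun m r hr => by
  rw [Function.comp_apply, hφ m r hr, hψ _ r hr, add_assoc]

lemma MapsMarked.exists_of_local {φ : Word → Word}
    (h₁ : ∀ p r₀, ∃ P δ, MapsMarked φ r₀ [p] P δ)
    (h₂ : ∀ p q, ∃ P : Word, ∀ L, L ≠ [] → φ (p :: q :: L) = P ++ L)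
    {pre : Word} (hpre : pre ≠ []) (r₀ : Word) : ∃ pre' δ, MapsMarked φ r₀ pre pre' δ := by
  rcases pre with _ | ⟨p, _ | ⟨q, rest⟩⟩
  · exact absurd rfl hpre
  · exact h₁ p r₀
  · obtain ⟨P, hP⟩ := h₂ p q
    exact ⟨P ++ rest, 0, fun m r _ => by simpa using hP (rest ++ .x m :: r) (by simp)⟩

-- `mulGen g` and `invGen g` read at most three letters and rewrite only the first two.
lemma mulGen_cons_cons (g p q : Gen) : ∃ P : Word, ∀ L, L ≠ [] → mulGen g (p :: q :: L) = P ++ L :=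
  ⟨(mulGen g [p, q, .b]).dropLast, fun L hL => by
    obtain ⟨s, L, rfl⟩ := List.exists_cons_of_ne_nil hL
    cases g <;> cases p <;> cases q <;> rfl⟩

lemma invGen_cons_cons (g p q : Gen) : ∃ P : Word, ∀ L, L ≠ [] → invGen g (p :: q :: L) = P ++ L :=
  ⟨(invGen g [p, q, .b]).dropLast, fun L hL => by
    obtain ⟨s, L, rfl⟩ := List.exists_cons_of_ne_nil hL
    cases g <;> cases p <;> cases q <;> rfl⟩

lemma mulGen_singleton_mapsMarked (g p : Gen) (r₀ : Word) :
    ∃ P δ, MapsMarked (mulGen g) r₀ [p] P δ := by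
  by_cases hp : p = .b
  · subst hp
    cases g
    case a => exact ⟨[.b], 0, fun m r _ => by simp [mulGen]⟩
    case c => exact ⟨[.b], 1, fun m r _ => rfl⟩
    case d =>
      refine ⟨if r₀ = [] then [.d, .b] else [.b], 0, fun m r hr => ?_⟩
      rcases r with _ | ⟨s, r⟩ <;> simp_all [mulGen]
    case b => exact ⟨[.b, .b], 0, fun m r _ => by simp [mulGen]⟩
    case f => exact ⟨[.f, .b], 0, fun m r _ => by simp [mulGen]⟩
    case x k => exact ⟨[.x k, .b], 0, fun m r _ => by simp [mulGen]⟩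
    case y k => exact ⟨[.y k, .b], 0, fun m r _ => by simp [mulGen]⟩
  · exact ⟨[g, p], 0, fun m r _ => by cases g <;> cases p <;> simp_all [mulGen]⟩

lemma invGen_singleton_mapsMarked (g p : Gen) (r₀ : Word) :
    ∃ P δ, MapsMarked (invGen g) r₀ [p] P δ := by
  cases g
  case b | x | y => exact ⟨[], 0, fun m r _ => by simp [invGen]⟩
  case c =>
    by_cases hp : p = .b
    · exact ⟨[.b], -1, fun m r _ => by simp [hp, invGen, sub_eq_add_neg]⟩
    · exact ⟨if p = .c then [] else [p], 0, fun m r _ => by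
        split_ifs <;> cases p <;> simp_all [invGen]⟩
  case a => exact ⟨if p = .a then [] else [p], 0, fun m r _ => by
    split_ifs <;> cases p <;> simp_all [invGen]⟩
  case d => exact ⟨if p = .d then [] else [p], 0, fun m r _ => by
    split_ifs <;> cases p <;> simp_all [invGen]⟩
  case f => exact ⟨if p = .f then [] else [p], 0, fun m r _ => by
    split_ifs <;> cases p <;> simp_all [invGen]⟩

lemma mulGen_mapsMarked (g : Gen) (pre r₀ : Word) :
    ∃ pre' δ, MapsMarked (mulGen g) r₀ pre pre' δ := by
  rcases pre with _ | ⟨p, pre⟩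
  · exact ⟨[g], 0, fun m r _ => by cases g <;> simp [mulGen]⟩
  · exact MapsMarked.exists_of_local (mulGen_singleton_mapsMarked g) (mulGen_cons_cons g)
      (List.cons_ne_nil p pre) r₀

lemma invGen_mapsMarked (g : Gen) {pre : Word} (hpre : pre ≠ []) (r₀ : Word) :
    ∃ pre' δ, MapsMarked (invGen g) r₀ pre pre' δ :=
  MapsMarked.exists_of_local (invGen_singleton_mapsMarked g) (invGen_cons_cons g) hpre r₀

lemma append_x_cons_inj {e : ℤ} (he : e ≠ 0) {A B r r' : Word} {i j : ℤ}
    (h₀ : A ++ .x i :: r = B ++ .x j :: r') (h₁ : A ++ .x (i + e) :: r = B ++ .x (j + e) :: r') :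
    A = B ∧ i = j := by
  induction A generalizing B with
  | nil =>
    cases B with
    | nil => simp_all
    | cons q B =>
      simp only [List.nil_append, List.cons_append, List.cons.injEq] at h₀ h₁
      exact absurd (by simpa [← h₀.1] using h₁.1) he
  | cons p A ih =>
    cases B with
    | nil =>
      simp only [List.nil_append, List.cons_append, List.cons.injEq] at h₀ h₁
      exact absurd (by simpa [h₀.1] using h₁.1) he
    | cons q B =>
      simp only [List.cons_append, List.cons.injEq] at h₀ h₁
      exact ⟨by rw [h₀.1, (ih h₀.2 h₁.2).1], (ih h₀.2 h₁.2).2⟩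

lemma mulGen_marked_inv {e : ℤ} (he : e ≠ 0) {g : Gen} {u v pre r : Word} {m : ℤ}
    (hu : mulGen g u = pre ++ .x m :: r) (hv : mulGen g v = pre ++ .x (m + e) :: r) :
    ∃ pre₀ δ, u = pre₀ ++ .x (m - δ) :: r ∧ v = pre₀ ++ .x (m - δ + e) :: r ∧
      MapsMarked (mulGen g) r pre₀ pre δ := by
  -- `g` is not the marked letter itself, whose index differs in `u` and `v`.
  have hpre : pre ≠ [] := by
    rintro rfl
    have := (eq_of_mulGen_eq_x_cons hu).symm.trans (eq_of_mulGen_eq_x_cons hv)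
    exact he (by simpa using this)
  obtain ⟨pre₀, δ₀, hinv⟩ := invGen_mapsMarked g hpre r
  have hu₀ : u = pre₀ ++ .x (m + δ₀) :: r := by
    rw [← invGen_mulGen g u, hu, hinv m r Iff.rfl]
  have hv₀ : v = pre₀ ++ .x (m + δ₀ + e) :: r := by
    rw [← invGen_mulGen g v, hv, hinv _ r Iff.rfl, add_right_comm]
  obtain ⟨pre₁, δ, hfwd⟩ := mulGen_mapsMarked g pre₀ r
  have h₀ := (hfwd _ r Iff.rfl).symm.trans (hu₀ ▸ hu)
  have h₁ := (hfwd _ r Iff.rfl).symm.trans (hv₀ ▸ hv)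
  rw [add_right_comm] at h₁
  obtain ⟨rfl, hδ⟩ := append_x_cons_inj he h₀ h₁
  have hm : m - δ = m + δ₀ := by omega
  exact ⟨pre₀, δ, hm ▸ hu₀, hm ▸ hv₀, hfwd⟩

lemma mulWord_mapsMarked (Q pre r₀ : Word) : ∃ pre' δ, MapsMarked (mulWord Q) r₀ pre pre' δ := by
  induction Q generalizing pre with
  | nil => exact ⟨pre, 0, fun m r _ => by simp⟩
  | cons g Q ih =>
    obtain ⟨pre₁, δ₁, hQ⟩ := ih pre
    obtain ⟨pre₂, δ₂, hg⟩ := mulGen_mapsMarked g pre₁ r₀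
    exact ⟨pre₂, δ₁ + δ₂, hQ.comp hg⟩

lemma mulWord_marked_inv {e : ℤ} (he : e ≠ 0) (Q : Word) {u v pre r : Word} {m : ℤ}
    (hu : mulWord Q u = pre ++ .x m :: r) (hv : mulWord Q v = pre ++ .x (m + e) :: r) :
    ∃ pre₀ δ, u = pre₀ ++ .x (m - δ) :: r ∧ v = pre₀ ++ .x (m - δ + e) :: r ∧
      MapsMarked (mulWord Q) r pre₀ pre δ := by
  induction Q generalizing pre m with
  | nil => exact ⟨pre, 0, by simpa using hu, by simpa using hv, fun m r _ => by simp⟩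
  | cons g Q ih =>
    obtain ⟨pre₁, δ₁, hu₁, hv₁, hg⟩ := mulGen_marked_inv he hu hv
    obtain ⟨pre₀, δ₀, hu₀, hv₀, hQ⟩ := ih hu₁ hv₁
    refine ⟨pre₀, δ₀ + δ₁, ?_, ?_, hQ.comp hg⟩
    · rw [hu₀, sub_sub, add_comm δ₁]
    · rw [hv₀, sub_sub, add_comm δ₁]

lemma block_marked {e : ℤ} (he : e ≠ 0) {p q u v u' v' : R} {pre r : Word} {m : ℤ}
    (hu' : q * u' = p * u) (hv' : q * v' = p * v)
    (hu : nf u = pre ++ .x m :: r) (hv : nf v = pre ++ .x (m + e) :: r) :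
    ∃ pre' δ, nf u' = pre' ++ .x (m + δ) :: r ∧ nf v' = pre' ++ .x (m + δ + e) :: r ∧
      ∀ m' r', (r' = [] ↔ r = []) →
        q * ofWord (pre' ++ .x (m' + δ) :: r') = p * ofWord (pre ++ .x m' :: r') := by
  obtain ⟨pre₁, δ₁, hp⟩ := mulWord_mapsMarked (nf p) pre r
  have hqu : mulWord (nf q) (nf u') = pre₁ ++ .x (m + δ₁) :: r := by
    rw [← nf_mul, hu', nf_mul, hu, hp m r Iff.rfl]
  have hqv : mulWord (nf q) (nf v') = pre₁ ++ .x (m + δ₁ + e) :: r := by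
    rw [← nf_mul, hv', nf_mul, hv, hp _ r Iff.rfl, add_right_comm]
  obtain ⟨pre₀, δ₂, hu₀, hv₀, hq⟩ := mulWord_marked_inv he (nf q) hqu hqv
  refine ⟨pre₀, δ₁ - δ₂, by rwa [add_sub_assoc] at hu₀, by rwa [add_sub_assoc] at hv₀,
    fun m' r' hr' => ?_⟩
  rw [mul_ofWord, mul_ofWord, hq _ r' hr', hp m' r' hr', ← add_sub_assoc, sub_add_cancel]

lemma BlockRun.marked {e : ℤ} (he : e ≠ 0) {l : List (R × R)} {u v uN vN : R}
    (hu : BlockRun l u uN) (hv : BlockRun l v vN) {pre r : Word} {m : ℤ}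
    (hnu : nf u = pre ++ .x m :: r) (hnv : nf v = pre ++ .x (m + e) :: r) :
    ∃ preN δ, nf uN = preN ++ .x (m + δ) :: r ∧ ∀ m' r', (r' = [] ↔ r = []) →
      BlockRun l (ofWord (pre ++ .x m' :: r')) (ofWord (preN ++ .x (m' + δ) :: r')) := by
  induction hu generalizing v vN pre m with
  | nil =>
    exact ⟨pre, 0, by simpa using hnu, fun m' r' _ => by simpa using .nil _⟩
  | cons hq _ ih =>
    obtain _ | ⟨hq', hv'⟩ := hv
    obtain ⟨pre₁, δ₁, hu₁, hv₁, hblock⟩ := block_marked he hq hq' hnu hnv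
    obtain ⟨preN, δ₂, huN, hrun⟩ := ih hv' hu₁ hv₁
    refine ⟨preN, δ₁ + δ₂, by rwa [← add_assoc], fun m' r' hr' => .cons (hblock m' r' hr') ?_⟩
    simpa [add_assoc] using hrun (m' + δ₁) r' hr'

lemma nf_ofWord_x_cons (n : ℤ) (r : Word) : nf (ofWord (.x n :: r)) = .x n :: nf (ofWord r) := by
  rw [nf_ofWord, nf_ofWord]
  rfl

theorem InInvHull.fixes_x_cons {h : R → Option R} (hh : InInvHull h) {n₀ n₁ : ℤ} (hn : n₀ ≠ n₁)
    {r : Word} (hr : nf (ofWord r) = r)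
    (hfix : h (ofWord (.x n₀ :: r)) = some (ofWord (.x n₀ :: r)))
    (hdom : ofWord (.x n₁ :: r) ∈ pdom h) (n : ℤ) {r' : Word} (hr' : r' = [] ↔ r = []) :
    h (ofWord (.x n :: r')) = some (ofWord (.x n :: r')) := by
  obtain ⟨l, hl⟩ := hh.exists_blockRun
  obtain ⟨t, ht⟩ := Option.ne_none_iff_exists'.1 hdom
  have hnf (k : ℤ) : nf (ofWord (.x k :: r)) = [] ++ .x k :: r := by
    rw [nf_ofWord_x_cons, hr, List.nil_append]
  obtain ⟨preN, δ, hN, hrun⟩ := BlockRun.marked (sub_ne_zero.2 hn.symm) ((hl _ _).1 hfix)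
    ((hl _ _).1 ht) (hnf n₀) (by rw [hnf, add_sub_cancel])
  rw [hnf] at hN
  obtain rfl : preN = [] := List.eq_nil_of_length_eq_zero (by simpa using congrArg List.length hN)
  obtain rfl : δ = 0 := by simpa using hN
  exact (hl _ _).2 (by simpa using hrun n r' hr')

/-- Let `h ∈ I_ℓ(R)`.
(1) If `h` fixes some `x_{n₀}` and `dom h` contains `x_{n₁}` for some `n₁ ≠ n₀`, then
`h` fixes `x_n` for all `n ∈ ℤ`.
(2) If `z` is a generator, `h` fixes `x_{n₀}·z` and `dom h` contains `x_{n₁}·z` for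
some `n₁ ≠ n₀`, then `h` fixes the constructible ideal `⋃_{n, w' ≠ e} x_n w' R`
pointwise. -/
theorem cstar_stmt18 (h : R → Option R) (hh : InInvHull h) :
    ((∃ n₀ n₁ : ℤ, n₀ ≠ n₁ ∧
        h (gen (Gen.x n₀)) = some (gen (Gen.x n₀)) ∧
        gen (Gen.x n₁) ∈ pdom h) →
      ∀ n : ℤ, h (gen (Gen.x n)) = some (gen (Gen.x n))) ∧
    (∀ z : Gen, (∃ n₀ n₁ : ℤ, n₀ ≠ n₁ ∧
        h (gen (Gen.x n₀) * gen z) = some (gen (Gen.x n₀) * gen z) ∧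
        gen (Gen.x n₁) * gen z ∈ pdom h) →
      PFixes h {u : R | ∃ (n : ℤ) (w' t : R), w' ≠ 1 ∧ u = gen (Gen.x n) * w' * t}) := by
  refine ⟨fun ⟨n₀, n₁, hn, hfix, hdom⟩ n => ?_, fun z ⟨n₀, n₁, hn, hfix, hdom⟩ => ?_⟩
  · simpa using hh.fixes_x_cons hn (r := []) (nf_ofWord []) (by simpa using hfix)
      (by simpa using hdom) n (r' := []) Iff.rfl
  · rintro _ ⟨n, w', t, hw', rfl⟩
    have hz : nf (ofWord [z]) = [z] := by
      rw [nf_ofWord, mulWord_cons, mulWord_nil, mulGen_nil]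
    simpa [ofWord_nf, mul_assoc] using hh.fixes_x_cons hn hz (by simpa using hfix)
      (by simpa using hdom) n (r' := nf (w' * t)) (by simp [nf_ne_nil_of_mul hw'])

end SgC
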